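/- arXiv:2303.07463 — 5 statements merged into one kernel-verified Lean document; each statement's English description precedes it below -/
import Mathlib

section
/- Let s₂ > 1 and let η be a real number with η > (3 − s₂)/(s₂ + 1). Then for every real a with −1 < a < 1, one has 2a² − (1+η)(1+s₂)·a + (1+η)s₂ + η − 1 > 0. -/
theorem quadratic_positivity_on_interval (s₂ η : ℝ) (hs₂ : 1 < s₂)
    (hη : η > (3 - s₂) / (s₂ + 1)) :
    ∀ a : ℝ, -1 < a → a < 1 →
      2 * a ^ 2 - (1 + η) * (1 + s₂) * a + (1 + η) * s₂ + η - 1 > 0 := by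
  intro a ha1 ha2
  have hpos : (0:ℝ) < s₂ + 1 := by linarith
  have h1 : η * (s₂ + 1) > 3 - s₂ := by
    have := (div_lt_iff₀ hpos).mp hη
    linarith
  have hC : (1 + η) * s₂ + η - 1 > 2 := by nlinarith
  nlinarith [mul_pos (show (0:ℝ) < 1 - a by linarith)
    (show (0:ℝ) < (1 + η) * s₂ + η - 1 - 2 * a by linarith)]
end

section
/- Let s₂ > 1 be real, let c > 0 be real, and let η be a real number with 0 ≤ η < 1 and η ≥ (3 − s₂)/(s₂ + 1). Then for every complex number s with |s| < 1, Re( c·(s − 1)(s − s₂)/(1 − η s) ) > 0. -/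
/-! The numerator `Re (δ(s) · conj (1 - η s))` of `Re (δ(s) / (1 - η s))` is, for fixed `x = Re s`,
affine in `|s|²`. At `|s|² = x²` (the real point `x`) it equals `(1 - η x)(1 - x)(s₂ - x) > 0`; on
the unit circle it equals `(1 - x)(s₂ - 1 + η (s₂ + 1) - 2x)`, which is `≥ 0` exactly because of
the lower bound on `η`. Interpolating, it is positive on the open disk. -/

open Complex ComplexConjugate

theorem Complex.re_div_pos_of_re_mul_conj_pos {a b : ℂ} (h : 0 < (a * conj b).re) :
    0 < (a / b).re := by
  have hb : b ≠ 0 := by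
    rintro rfl
    simp at h
  have hdiv : a / b = a * conj b / (normSq b : ℂ) := by
    rw [← mul_conj, mul_div_mul_right _ _ ((map_ne_zero _).mpr hb)]
  rw [hdiv, div_ofReal_re]
  exact div_pos h (normSq_pos.mpr hb)

section BDF2Multiplier

variable (s₂ η : ℝ) (s : ℂ)

theorem one_sub_re_sq_mul_re_multiplier_numerator :
    (1 - s.re ^ 2) * ((s - 1) * (s - s₂) * conj (1 - η * s)).re =
      (1 - normSq s) * ((1 - η * s.re) * (1 - s.re) * (s₂ - s.re)) +
        s.im ^ 2 * ((1 - s.re) * (s₂ - 1 + η * (s₂ + 1) - 2 * s.re)) := by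
  simp only [normSq_apply, mul_re, mul_im, sub_re, sub_im, one_re, one_im, ofReal_re,
    ofReal_im, conj_re, conj_im]
  ring

variable {s₂ η s}

theorem re_multiplier_numerator_pos (hs₂ : 1 < s₂) (hη1 : η ≤ 1)
    (hη : 3 - s₂ ≤ η * (s₂ + 1)) (hs : ‖s‖ < 1) :
    0 < ((s - 1) * (s - s₂) * conj (1 - η * s)).re := by
  have hnormSq : normSq s < 1 := by
    rw [normSq_eq_norm_sq]
    nlinarith [norm_nonneg s]
  have hre : |s.re| < 1 := (abs_re_le_norm s).trans_lt hs
  have hη_abs : |η| ≤ 1 := abs_le.mpr ⟨by nlinarith, hη1⟩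
  have hηre : η * s.re < 1 := by
    calc η * s.re ≤ |η * s.re| := le_abs_self _
      _ = |η| * |s.re| := abs_mul η s.re
      _ < 1 := by nlinarith [abs_nonneg η, abs_nonneg s.re]
  obtain ⟨hre_lo, hre_hi⟩ := abs_lt.mp hre
  have hreal : 0 < (1 - η * s.re) * (1 - s.re) * (s₂ - s.re) :=
    mul_pos (mul_pos (by linarith) (by linarith)) (by linarith)
  have hcircle : 0 ≤ (1 - s.re) * (s₂ - 1 + η * (s₂ + 1) - 2 * s.re) :=
    mul_nonneg (by linarith) (by linarith)
  have hweight : 0 < 1 - s.re ^ 2 := by nlinarith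
  refine pos_of_mul_pos_right ?_ hweight.le
  rw [one_sub_re_sq_mul_re_multiplier_numerator]
  exact add_pos_of_pos_of_nonneg (mul_pos (by linarith) hreal) (mul_nonneg (sq_nonneg _) hcircle)

end BDF2Multiplier

theorem multiplier_positivity_on_unit_disk_general (s₂ c η : ℝ) (hs₂ : 1 < s₂) (hc : 0 < c)
    (hη1 : η < 1) (hη : η ≥ (3 - s₂) / (s₂ + 1)) :
    ∀ s : ℂ, ‖s‖ < 1 →
      ((c : ℂ) * (s - 1) * (s - (s₂ : ℂ)) / (1 - (η : ℂ) * s)).re > 0 := by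
  intro s hs
  have hη' : 3 - s₂ ≤ η * (s₂ + 1) := (div_le_iff₀ (by linarith)).mp hη
  have hnum := re_multiplier_numerator_pos hs₂ hη1.le hη' hs
  rw [mul_assoc, mul_div_assoc, re_ofReal_mul]
  exact mul_pos hc (re_div_pos_of_re_mul_conj_pos hnum)

theorem multiplier_positivity_on_unit_disk (s₂ c η : ℝ) (hs₂ : 1 < s₂) (hc : 0 < c)
    (hη0 : 0 ≤ η) (hη1 : η < 1) (hη : η ≥ (3 - s₂) / (s₂ + 1)) :
    ∀ s : ℂ, ‖s‖ < 1 →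
      ((c : ℂ) * (s - 1) * (s - (s₂ : ℂ)) / (1 - (η : ℂ) * s)).re > 0 :=
  multiplier_positivity_on_unit_disk_general s₂ c η hs₂ hc hη1 hη
end

section
/- Let 0 < κ < 1 + √2 and define δ₀ = (1+2κ)/(1+κ), δ₁ = −(1+κ), δ₂ = κ²/(1+κ). Let η be a real number with 0 ≤ η < 1 and η > (3κ² − 2κ − 1)/(κ+1)². Then for every complex number s with |s| < 1, Re( (δ₀ + δ₁ s + δ₂ s²)/(1 − η s) ) > 0. -/
/-!
The BDF-2 polynomial factors as `δ(s) = (1 - s)(a - b s) / (1 + κ)` with `a = 1 + 2κ`, `b = κ²`,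
and `Re(δ(s) / (1 - ηs))` has the sign of `Re((1 - s)(a - b s)(1 - η s̄))`. Writing `s = x + iy`,
this real part times `1 + x` equals `(1 - |s|²)(1 - ηx)(a - bx) + y² (a - b + η(a + b) - 2bx)`.
On the unit disk the first term is positive as soon as `0 ≤ b < a` (which is `κ < 1 + √2`) and
`|η| < 1`; the second is nonnegative because `a - 3b + η(a + b) > 0` is the lower bound on `η`.
-/

open ComplexConjugate

namespace Complex

theorem re_div_eq_re_mul_conj_div_normSq (z w : ℂ) : (z / w).re = (z * conj w).re / normSq w := by
  rw [div_eq_mul_inv, inv_def, ← mul_assoc, mul_comm _ ((_ : ℝ) : ℂ), re_ofReal_mul]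
  ring

theorem re_div_pos_iff {z w : ℂ} (hw : w ≠ 0) : 0 < (z / w).re ↔ 0 < (z * conj w).re := by
  rw [re_div_eq_re_mul_conj_div_normSq, div_pos_iff_of_pos_right (normSq_pos.2 hw)]

end Complex

open Complex

section Multiplier

variable (a b η : ℝ) (s : ℂ)

theorem one_add_re_mul_re_multiplier_numerator :
    (1 + s.re) * ((1 - s) * (a - b * s) * (1 - η * conj s)).re =
      (1 - normSq s) * (1 - η * s.re) * (a - b * s.re) +
        s.im ^ 2 * (a - b + η * (a + b) - 2 * b * s.re) := by
  simp only [mul_re, mul_im, sub_re, sub_im, one_re, one_im, ofReal_re, ofReal_im, conj_re,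
    conj_im, normSq_apply]
  ring

variable {a b η s}

theorem re_multiplier_pos (hb : 0 ≤ b) (hba : b < a) (hη : |η| < 1)
    (habη : 3 * b ≤ a + η * (a + b)) (hs : ‖s‖ < 1) :
    0 < ((1 - s) * (a - b * s) / (1 - η * s)).re := by
  have hx : |s.re| < 1 := (abs_re_le_norm s).trans_lt hs
  obtain ⟨hx₀, hx₁⟩ := abs_lt.1 hx
  have hr : normSq s < 1 := by
    rw [normSq_eq_norm_sq]
    exact pow_lt_one₀ (norm_nonneg s) hs two_ne_zero
  have hηx : 0 < 1 - η * s.re := by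
    have : |η * s.re| < 1 := by
      rw [abs_mul]
      exact mul_lt_one_of_nonneg_of_lt_one_left (abs_nonneg η) hη hx.le
    linarith [le_abs_self (η * s.re)]
  have hden : (1 : ℂ) - η * s ≠ 0 := fun h ↦ hηx.ne' (by simpa using congrArg re h)
  have hbx : b * s.re ≤ b := by simpa using mul_le_mul_of_nonneg_left hx₁.le hb
  have hlin : 0 < a - b * s.re := by linarith
  have hquad : 0 ≤ a - b + η * (a + b) - 2 * b * s.re := by linarith
  rw [re_div_pos_iff hden, map_sub, map_one, map_mul, conj_ofReal]
  refine pos_of_mul_pos_right ?_ (by linarith : 0 ≤ 1 + s.re)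
  rw [one_add_re_mul_re_multiplier_numerator]
  have := mul_pos (mul_pos (by linarith : 0 < 1 - normSq s) hηx) hlin
  positivity

end Multiplier

theorem bdf2_multiplier_condition (κ : ℝ) (hκ0 : 0 < κ) (hκ : κ < 1 + Real.sqrt 2)
    (η : ℝ) (hη0 : 0 ≤ η) (hη1 : η < 1)
    (hη : η > (3 * κ ^ 2 - 2 * κ - 1) / (κ + 1) ^ 2) :
    ∀ s : ℂ, ‖s‖ < 1 →
      (((((1 + 2 * κ) / (1 + κ) : ℝ) : ℂ) + ((-(1 + κ) : ℝ) : ℂ) * s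
          + ((κ ^ 2 / (1 + κ) : ℝ) : ℂ) * s ^ 2) / (1 - (η : ℂ) * s)).re > 0 := by
  intro s hs
  have hκ1 : 0 < 1 + κ := by linarith
  have hfactor : ((((1 + 2 * κ) / (1 + κ) : ℝ) : ℂ) + ((-(1 + κ) : ℝ) : ℂ) * s
      + ((κ ^ 2 / (1 + κ) : ℝ) : ℂ) * s ^ 2) =
        (((1 + κ)⁻¹ : ℝ) : ℂ) * ((1 - s) * (((1 + 2 * κ : ℝ) : ℂ) - ((κ ^ 2 : ℝ) : ℂ) * s)) := by
    have : (1 + κ : ℂ) ≠ 0 := by exact_mod_cast hκ1.ne'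
    push_cast
    field_simp
    ring
  have hκsq : κ ^ 2 < 1 + 2 * κ := by
    have : (κ - 1) ^ 2 < 2 :=
      Real.sq_lt.2 ⟨by linarith [Real.one_lt_sqrt_two], by linarith⟩
    linarith
  have hηκ : 3 * κ ^ 2 ≤ 1 + 2 * κ + η * (1 + 2 * κ + κ ^ 2) := by
    have := (div_lt_iff₀ (by positivity : (0 : ℝ) < (κ + 1) ^ 2)).1 hη
    linarith
  rw [gt_iff_lt, hfactor, mul_div_assoc, re_ofReal_mul]
  exact mul_pos (inv_pos.2 hκ1)
    (re_multiplier_pos (sq_nonneg κ) hκsq (abs_lt.2 ⟨by linarith, hη1⟩) hηκ hs)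
end

section
/- Let s₂ > 1 be real and set η = 1/s₂. Then 0 < η < 1, η ≥ (3 − s₂)/(s₂ + 1), and for every complex number s with |s| < 1, Re( (s − 1)(s − s₂)/(1 − η s) ) > 0. -/
/-! The multiplier `1 - s / s₂` is, up to the factor `-1 / s₂`, the root factor `s - s₂` of
`(s - 1)(s - s₂)`, so the quotient collapses to the linear polynomial `s₂ (1 - s)`, whose real
part `s₂ (1 - Re s)` is positive on the open unit disk. -/

lemma mul_sub_div_one_sub_inv_mul {K : Type*} [Field K] {a s : K} (ha : a ≠ 0) (hs : s ≠ a) :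
    (s - 1) * (s - a) / (1 - a⁻¹ * s) = a * (1 - s) := by
  have hden : 1 - a⁻¹ * s ≠ 0 := by
    rw [sub_ne_zero]
    exact fun h => hs ((inv_mul_eq_one₀ ha).mp h.symm).symm
  rw [div_eq_iff hden]
  field_simp
  ring

lemma Complex.re_one_sub_pos_of_norm_lt_one {s : ℂ} (hs : ‖s‖ < 1) : 0 < (1 - s).re := by
  rw [Complex.sub_re, Complex.one_re, sub_pos]
  exact (Complex.re_le_norm s).trans_lt hs

lemma Complex.ne_ofReal_of_norm_lt_one {s : ℂ} {a : ℝ} (ha : 1 ≤ a) (hs : ‖s‖ < 1) :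
    s ≠ a := by
  rintro rfl
  rw [Complex.norm_real, Real.norm_of_nonneg (by linarith)] at hs
  linarith

lemma three_sub_div_add_one_le_one_div {x : ℝ} (hx : 0 < x) : (3 - x) / (x + 1) ≤ 1 / x := by
  rw [div_le_div_iff₀ (by linarith) hx]
  nlinarith [sq_nonneg (x - 1)]

theorem multiplier_choice_inverse_root (s₂ : ℝ) (hs₂ : 1 < s₂) :
    0 < 1 / s₂ ∧ 1 / s₂ < 1 ∧ 1 / s₂ ≥ (3 - s₂) / (s₂ + 1) ∧
    ∀ s : ℂ, ‖s‖ < 1 →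
      ((s - 1) * (s - (s₂ : ℂ)) / (1 - ((1 / s₂ : ℝ) : ℂ) * s)).re > 0 := by
  have hpos : 0 < s₂ := one_pos.trans hs₂
  refine ⟨one_div_pos.mpr hpos, (div_lt_one hpos).mpr hs₂,
    three_sub_div_add_one_le_one_div hpos, fun s hs => ?_⟩
  have hne : (s₂ : ℂ) ≠ 0 := Complex.ofReal_ne_zero.mpr hpos.ne'
  rw [one_div, Complex.ofReal_inv,
    mul_sub_div_one_sub_inv_mul hne (Complex.ne_ofReal_of_norm_lt_one hs₂.le hs),
    Complex.re_ofReal_mul]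
  exact mul_pos hpos (Complex.re_one_sub_pos_of_norm_lt_one hs)
end

section
/- Let E be a real normed vector space and F a real inner product space. Let a, b, v : E → F be differentiable at a point x with ‖a(x)‖ = 1 and ‖b(x)‖ = 1, and define p : E → F by p(y) = ⟨a(y), v(y)⟩·a(y) − ⟨b(y), v(y)⟩·b(y). Then p is differentiable at x and its derivative satisfies ‖Dp(x)‖ ≤ 2·‖Da(x) − Db(x)‖·‖v(x)‖ + 2·max(‖Da(x)‖, ‖Db(x)‖)·‖a(x) − b(x)‖·‖v(x)‖ + 2·‖a(x) − b(x)‖·‖Dv(x)‖ (operator norms on derivatives). -/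
/-!
By the product rule, `Dp(x) u` is the difference of the derivatives of `(m, w) ↦ ⟪m, w⟫ • m`
at `(a x, v x)` along `(Da u, Dv u)` and at `(b x, v x)` along `(Db u, Dv u)`. Each of the three
resulting pairs of terms is split as `⟪x, w⟫ • y - ⟪x', w⟫ • y' = ⟪x - x', w⟫ • y + ⟪x', w⟫ • (y - y')`,
and the unit norms of `a x` and `b x` absorb the remaining factors.
-/

open scoped RealInnerProductSpace

section InnerSmul

variable {F : Type*} [NormedAddCommGroup F] [InnerProductSpace ℝ F]

theorem norm_inner_smul_sub_inner_smul_le (x x' w y y' : F) :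
    ‖⟪x, w⟫ • y - ⟪x', w⟫ • y'‖ ≤ ‖x - x'‖ * ‖w‖ * ‖y‖ + ‖x'‖ * ‖w‖ * ‖y - y'‖ := by
  have hsplit : ⟪x, w⟫ • y - ⟪x', w⟫ • y' = ⟪x - x', w⟫ • y + ⟪x', w⟫ • (y - y') := by
    rw [inner_sub_left]
    module
  rw [hsplit]
  refine (norm_add_le _ _).trans (add_le_add ?_ ?_) <;>
  · rw [norm_smul, Real.norm_eq_abs]
    gcongr
    exact abs_real_inner_le_norm _ _

theorem norm_inner_smul_deriv_sub_le {m n : F} (hm : ‖m‖ = 1) (hn : ‖n‖ = 1)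
    (w dm dn dw : F) :
    ‖(⟪dm, w⟫ • m + ⟪m, dw⟫ • m + ⟪m, w⟫ • dm) - (⟪dn, w⟫ • n + ⟪n, dw⟫ • n + ⟪n, w⟫ • dn)‖ ≤
      2 * ‖dm - dn‖ * ‖w‖ + 2 * max ‖dm‖ ‖dn‖ * ‖m - n‖ * ‖w‖ + 2 * ‖m - n‖ * ‖dw‖ := by
  have hregroup : (⟪dm, w⟫ • m + ⟪m, dw⟫ • m + ⟪m, w⟫ • dm) -
      (⟪dn, w⟫ • n + ⟪n, dw⟫ • n + ⟪n, w⟫ • dn) =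
      (⟪dm, w⟫ • m - ⟪dn, w⟫ • n) + (⟪m, dw⟫ • m - ⟪n, dw⟫ • n) +
        (⟪m, w⟫ • dm - ⟪n, w⟫ • dn) := by
    abel
  have hdirection := norm_inner_smul_sub_inner_smul_le dm dn w m n
  have hfield := norm_inner_smul_sub_inner_smul_le m n dw m n
  have hbase := norm_inner_smul_sub_inner_smul_le m n w dm dn
  rw [hm, hn] at hfield
  rw [hm] at hdirection
  rw [hn] at hbase
  have hdm : ‖dm‖ ≤ max ‖dm‖ ‖dn‖ := le_max_left _ _
  have hdn : ‖dn‖ ≤ max ‖dm‖ ‖dn‖ := le_max_right _ _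
  rw [hregroup]
  refine norm_add₃_le.trans ?_
  nlinarith [mul_nonneg (norm_nonneg (m - n)) (norm_nonneg w)]

end InnerSmul

theorem fderiv_inner_smul_self_apply {E : Type*} [NormedAddCommGroup E] [NormedSpace ℝ E]
    {F : Type*} [NormedAddCommGroup F] [InnerProductSpace ℝ F]
    {a v : E → F} {x : E} (ha : DifferentiableAt ℝ a x) (hv : DifferentiableAt ℝ v x) (u : E) :
    fderiv ℝ (fun y => ⟪a y, v y⟫ • a y) x u =
      ⟪fderiv ℝ a x u, v x⟫ • a x + ⟪a x, fderiv ℝ v x u⟫ • a x + ⟪a x, v x⟫ • fderiv ℝ a x u := by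
  have hderiv : HasFDerivAt (fun y => ⟪a y, v y⟫ • a y) _ x :=
    (ha.hasFDerivAt.inner ℝ hv.hasFDerivAt).smul ha.hasFDerivAt
  rw [hderiv.fderiv]
  simp only [add_apply, smul_apply, ContinuousLinearMap.smulRight_apply,
    ContinuousLinearMap.comp_apply, ContinuousLinearMap.prod_apply, fderivInnerCLM_apply]
  module

theorem projection_difference_derivative_bound
    {E : Type*} [NormedAddCommGroup E] [NormedSpace ℝ E]
    {F : Type*} [NormedAddCommGroup F] [InnerProductSpace ℝ F]
    (a b v : E → F) (x : E)
    (ha : DifferentiableAt ℝ a x) (hb : DifferentiableAt ℝ b x)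
    (hv : DifferentiableAt ℝ v x)
    (hax : ‖a x‖ = 1) (hbx : ‖b x‖ = 1) :
    DifferentiableAt ℝ (fun y => ⟪a y, v y⟫ • a y - ⟪b y, v y⟫ • b y) x ∧
    ‖fderiv ℝ (fun y => ⟪a y, v y⟫ • a y - ⟪b y, v y⟫ • b y) x‖ ≤
      2 * ‖fderiv ℝ a x - fderiv ℝ b x‖ * ‖v x‖
        + 2 * max ‖fderiv ℝ a x‖ ‖fderiv ℝ b x‖ * ‖a x - b x‖ * ‖v x‖
        + 2 * ‖a x - b x‖ * ‖fderiv ℝ v x‖ := by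
  have hpa : DifferentiableAt ℝ (fun y => ⟪a y, v y⟫ • a y) x := (ha.inner ℝ hv).smul ha
  have hpb : DifferentiableAt ℝ (fun y => ⟪b y, v y⟫ • b y) x := (hb.inner ℝ hv).smul hb
  refine ⟨hpa.sub hpb, ContinuousLinearMap.opNorm_le_bound _ (by positivity) fun u => ?_⟩
  set A := fderiv ℝ a x
  set B := fderiv ℝ b x
  set V := fderiv ℝ v x
  have hAB : ‖A u - B u‖ ≤ ‖A - B‖ * ‖u‖ := (A - B).le_opNorm u
  have hmax : max ‖A u‖ ‖B u‖ ≤ max ‖A‖ ‖B‖ * ‖u‖ := by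
    rw [max_mul_of_nonneg _ _ (norm_nonneg u)]
    exact max_le_max (A.le_opNorm u) (B.le_opNorm u)
  have hV : ‖V u‖ ≤ ‖V‖ * ‖u‖ := V.le_opNorm u
  rw [fderiv_fun_sub hpa hpb, sub_apply, fderiv_inner_smul_self_apply ha hv,
    fderiv_inner_smul_self_apply hb hv]
  calc _ ≤ 2 * ‖A u - B u‖ * ‖v x‖ + 2 * max ‖A u‖ ‖B u‖ * ‖a x - b x‖ * ‖v x‖
        + 2 * ‖a x - b x‖ * ‖V u‖ := norm_inner_smul_deriv_sub_le hax hbx _ _ _ _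
    _ ≤ 2 * (‖A - B‖ * ‖u‖) * ‖v x‖ + 2 * (max ‖A‖ ‖B‖ * ‖u‖) * ‖a x - b x‖ * ‖v x‖
        + 2 * ‖a x - b x‖ * (‖V‖ * ‖u‖) := by gcongr
    _ = _ := by ring
end
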